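/- arXiv:math/0611273 — 3 statements merged into one kernel-verified Lean document; each statement's English description precedes it below -/
import Mathlib

section
/- Let u ∈ ℝ be a threshold. For each n ∈ ℕ, let Y_n be a real Gaussian random variable with variance Var(Y_n) ≥ v for some fixed v > 0, let σ̃_n > 0, and let ζ_n be a centered Gaussian random variable with variance σ̃_n², independent of Y_n. Let a_n, b_n ∈ ℝ and set X_n := (1+a_n)·Y_n + b_n + ζ_n. Let (σ_n) be a sequence of positive reals with σ_n → 0, and suppose there exist constants K_a, K_b > 0 such that for all n: |a_n| ≤ K_a·σ_n, |b_n| ≤ K_b·σ_n, and σ̃_n ≤ σ_n. Then there exist a constant C > 0 and N ∈ ℕ such that for all n ≥ N, E[(1_{X_n ≥ u} − 1_{Y_n ≥ u})²] ≤ C · σ_n · |log σ_n|^{1/2}. -/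
open MeasureTheory ProbabilityTheory Real Filter
open Set

lemma gaussianPDFReal_le (m : ℝ) (s : NNReal) (x : ℝ) :
    gaussianPDFReal m s x ≤ (Real.sqrt (2 * π * s))⁻¹ := by
  unfold gaussianPDFReal
  have h1 : rexp (-(x - m) ^ 2 / (2 * s)) ≤ 1 := by
    apply Real.exp_le_one_iff.mpr
    apply div_nonpos_of_nonpos_of_nonneg (neg_nonpos.mpr (sq_nonneg _))
    positivity
  exact mul_le_of_le_one_right (by positivity) h1

lemma gauss_Icc_le (m : ℝ) (s : NNReal) (hs : s ≠ 0) {l r : ℝ} (h : l ≤ r) :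
    ((gaussianReal m s) (Set.Icc l r)).toReal ≤ (r - l) * (Real.sqrt (2 * π * s))⁻¹ := by
  rw [gaussianReal_apply_eq_integral m hs, ENNReal.toReal_ofReal
    (setIntegral_nonneg measurableSet_Icc fun x _ => gaussianPDFReal_nonneg m s x)]
  calc ∫ x in Icc l r, gaussianPDFReal m s x
      ≤ ∫ _x in Icc l r, (Real.sqrt (2 * π * s))⁻¹ :=
        setIntegral_mono_on ((integrable_gaussianPDFReal m s).integrableOn)
          (integrableOn_const measure_Icc_lt_top.ne) measurableSet_Icc
          (fun x _ => gaussianPDFReal_le m s x)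
    _ = (r - l) * (Real.sqrt (2 * π * s))⁻¹ := by
        rw [setIntegral_const, measureReal_def, Real.volume_Icc, ENNReal.toReal_ofReal (sub_nonneg.2 h)]
        rfl

lemma gauss_Ici_le {s t : ℝ} (hs : 0 < s) (ht : 0 < t) :
    ((gaussianReal 0 ⟨s, hs.le⟩) (Ici t)).toReal
      ≤ (Real.sqrt s / t) * rexp (-t ^ 2 / (2 * s)) := by
  have hs' : (⟨s, hs.le⟩ : NNReal) ≠ 0 := (NNReal.coe_ne_zero (r := ⟨s, hs.le⟩)).mp hs.ne'
  rw [gaussianReal_apply_eq_integral 0 hs', ENNReal.toReal_ofReal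
    (setIntegral_nonneg measurableSet_Ici fun x _ => gaussianPDFReal_nonneg 0 ⟨s, hs.le⟩ x)]
  have h2s : (0:ℝ) < 2 * s := by positivity
  set C : ℝ := (Real.sqrt (2 * π * s))⁻¹ * (rexp (-t ^ 2 / (2 * s)) * rexp (t ^ 2 / s)) with hC
  have hCpos : 0 < C := by positivity
  have hint : IntegrableOn (fun x : ℝ => C * rexp (-(t / s * x))) (Ici t) := by
    have := ((integrableOn_Ici_iff_integrableOn_Ioi).mpr
      (exp_neg_integrableOn_Ioi t (div_pos ht hs))).const_mul C
    simpa [neg_mul, IntegrableOn] using this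
  have hpt : ∀ x ∈ Ici t, gaussianPDFReal 0 (⟨s, hs.le⟩ : NNReal) x
      ≤ C * rexp (-(t / s * x)) := by
    intro x _
    show (Real.sqrt (2 * π * (⟨s, hs.le⟩ : NNReal)))⁻¹ * rexp (-(x - 0) ^ 2 / (2 * (⟨s, hs.le⟩ : NNReal)))
      ≤ C * rexp (-(t / s * x))
    simp only [NNReal.coe_mk, sub_zero]
    rw [hC, mul_assoc, mul_assoc, ← Real.exp_add, ← Real.exp_add]
    apply mul_le_mul_of_nonneg_left _ (by positivity)
    apply Real.exp_le_exp.mpr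
    have heq : -t ^ 2 / (2 * s) + t ^ 2 / s + -(t / s * x) = (t ^ 2 - 2 * t * x) / (2 * s) := by
      field_simp; ring
    rw [heq, div_le_div_iff₀ h2s h2s]
    nlinarith [sq_nonneg (x - t)]
  calc ∫ x in Ici t, gaussianPDFReal 0 (⟨s, hs.le⟩ : NNReal) x
      ≤ ∫ x in Ici t, C * rexp (-(t / s * x)) :=
        setIntegral_mono_on ((integrable_gaussianPDFReal _ _).integrableOn)
          hint measurableSet_Ici hpt
    _ = C * ∫ x in Ici t, rexp (-(t / s * x)) := integral_const_mul C _
    _ = C * ((t / s)⁻¹ * rexp (-(t / s * t))) := by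
        rw [integral_Ici_eq_integral_Ioi,
          integral_comp_mul_left_Ioi (fun y => rexp (-y)) t (div_pos ht hs),
          smul_eq_mul, integral_exp_neg_Ioi]
    _ = (Real.sqrt (2 * π * s))⁻¹ * s / t * rexp (-t ^ 2 / (2 * s)) := by
        rw [hC, inv_div]
        have h1 : rexp (t ^ 2 / s) * rexp (-(t / s * t)) = 1 := by
          rw [← Real.exp_add, show t ^ 2 / s + -(t / s * t) = 0 by field_simp; ring, Real.exp_zero]
        linear_combination ((Real.sqrt (2 * π * s))⁻¹ * rexp (-t ^ 2 / (2 * s)) * (s / t)) * h1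
    _ ≤ (Real.sqrt s / t) * rexp (-t ^ 2 / (2 * s)) := by
        have hss : 0 < Real.sqrt s := Real.sqrt_pos.2 hs
        have h4 : Real.sqrt s ≤ Real.sqrt (2 * π * s) := by
          apply Real.sqrt_le_sqrt
          nlinarith [Real.pi_gt_three]
        have h3 : (Real.sqrt (2 * π * s))⁻¹ * s ≤ Real.sqrt s := by
          calc (Real.sqrt (2 * π * s))⁻¹ * s ≤ (Real.sqrt s)⁻¹ * s :=
                mul_le_mul_of_nonneg_right (inv_anti₀ hss h4) hs.le
            _ = Real.sqrt s := by
                rw [inv_mul_eq_div, ← Real.sqrt_mul_self hs.le]; field_simp; rw [Real.sq_sqrt (Real.sqrt_nonneg _)]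
        apply mul_le_mul_of_nonneg_right _ (Real.exp_pos _).le
        exact div_le_div_of_nonneg_right h3 ht.le


lemma gauss_abs_le {s t : ℝ} (hs : 0 < s) (ht : 0 < t) :
    ((gaussianReal 0 ⟨s, hs.le⟩) {x | t ≤ |x|}).toReal
      ≤ 2 * ((Real.sqrt s / t) * rexp (-t ^ 2 / (2 * s))) := by
  set μ := gaussianReal 0 (⟨s, hs.le⟩ : NNReal) with hμ
  haveI : IsProbabilityMeasure μ := instIsProbabilityMeasureGaussianReal 0 _
  have hsymm : μ (Iic (-t)) = μ (Ici t) := by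
    have hmap : μ.map (fun x => (-1 : ℝ) * x) = μ := by
      rw [hμ, gaussianReal_map_const_mul (μ := 0) (v := ⟨s, hs.le⟩) (-1)]
      norm_num
      exact congrArg _ (one_mul _)
    conv_lhs => rw [← hmap]
    rw [Measure.map_apply (measurable_const_mul _) measurableSet_Iic]
    congr 1
    ext x
    simp only [mem_preimage, mem_Iic, mem_Ici]
    constructor <;> intro h <;> linarith
  have hsub : {x : ℝ | t ≤ |x|} ⊆ Iic (-t) ∪ Ici t := by
    intro x hx
    have hx' : t ≤ |x| := hx
    rcases le_abs.mp hx' with h | h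
    · exact Or.inr h
    · exact Or.inl (by simpa [mem_Iic] using (by linarith : x ≤ -t))
  calc (μ {x | t ≤ |x|}).toReal
      ≤ (μ (Iic (-t)) + μ (Ici t)).toReal := by
        apply ENNReal.toReal_mono
        · exact ENNReal.add_ne_top.mpr ⟨measure_ne_top μ _, measure_ne_top μ _⟩
        · exact le_trans (measure_mono hsub) (measure_union_le _ _)
    _ = (μ (Iic (-t))).toReal + (μ (Ici t)).toReal :=
        ENNReal.toReal_add (measure_ne_top μ _) (measure_ne_top μ _)
    _ = 2 * (μ (Ici t)).toReal := by rw [hsymm]; ring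
    _ ≤ 2 * ((Real.sqrt s / t) * rexp (-t ^ 2 / (2 * s))) := by
        have := gauss_Ici_le hs ht
        linarith

lemma integral_sq_gauss_le (m : ℝ) (s : NNReal) :
    ∫ x, (x - m) ^ 2 ∂(gaussianReal m s) ≤ 6 * s := by
  by_cases hs : s = 0
  · subst hs
    simp [integral_dirac]
  · have hspos : (0 : ℝ) < s := lt_of_le_of_ne s.coe_nonneg (by exact_mod_cast (Ne.symm hs))
    rw [gaussianReal_of_var_ne_zero m hs]
    have hwd : (volume.withDensity (gaussianPDF m s))
        = volume.withDensity (fun x => ((fun x => (gaussianPDFReal m s x).toNNReal) x : ENNReal)) :=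
      rfl
    rw [hwd, integral_withDensity_eq_integral_smul
      ((measurable_gaussianPDFReal m s).real_toNNReal) (fun x => (x - m) ^ 2)]
    have hptw : ∀ x : ℝ, (gaussianPDFReal m s x).toNNReal • (x - m) ^ 2
        = gaussianPDFReal m s x * (x - m) ^ 2 := by
      intro x
      rw [NNReal.smul_def, Real.coe_toNNReal _ (gaussianPDFReal_nonneg m s x), smul_eq_mul]
    simp only [hptw]
    have hb : (0 : ℝ) < 1 / (4 * s) := by positivity
    set g : ℝ → ℝ :=
      fun x => (4 * s * (Real.sqrt (2 * π * s))⁻¹) * rexp (-(1 / (4 * s)) * (x - m) ^ 2) with hg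
    have hgint : Integrable g :=
      ((integrable_exp_neg_mul_sq hb).comp_sub_right m).const_mul _
    have hle : ∀ x, gaussianPDFReal m s x * (x - m) ^ 2 ≤ g x := by
      intro x
      unfold gaussianPDFReal
      rw [hg]
      have hykey : (x - m) ^ 2 * rexp (-(1 / (4 * (s:ℝ))) * (x - m) ^ 2) ≤ 4 * s := by
        set q : ℝ := (x - m) ^ 2 / (4 * s) with hq
        have hq0 : 0 ≤ q := by positivity
        have h1 : q + 1 ≤ rexp q := Real.add_one_le_exp q
        have hexp : 0 < rexp q := Real.exp_pos q
        have h2 : -(1 / (4 * (s:ℝ))) * (x - m) ^ 2 = -q := by rw [hq]; field_simp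
        have h3 : (x - m) ^ 2 = 4 * (s:ℝ) * q := by rw [hq]; field_simp
        rw [h2, Real.exp_neg, h3]
        calc 4 * (s:ℝ) * q * (rexp q)⁻¹ ≤ 4 * (s:ℝ) * rexp q * (rexp q)⁻¹ := by
              have h4 : q ≤ rexp q := by linarith
              apply mul_le_mul_of_nonneg_right _ (by positivity)
              nlinarith
          _ = 4 * (s:ℝ) := by field_simp
      have hsplit : rexp (-(x - m) ^ 2 / (2 * (s:ℝ)))
          = rexp (-(1 / (4 * (s:ℝ))) * (x - m) ^ 2) * rexp (-(1 / (4 * (s:ℝ))) * (x - m) ^ 2) := by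
        rw [← Real.exp_add]
        congr 1
        field_simp
        ring
      rw [hsplit]
      set c : ℝ := (Real.sqrt (2 * π * (s:ℝ)))⁻¹ with hcc
      set e : ℝ := rexp (-(1 / (4 * (s:ℝ))) * (x - m) ^ 2) with he
      have hcn : 0 ≤ c := by positivity
      have hen : 0 < e := Real.exp_pos _
      calc c * (e * e) * (x - m) ^ 2 = (c * e) * ((x - m) ^ 2 * e) := by ring
        _ ≤ (c * e) * (4 * s) := mul_le_mul_of_nonneg_left hykey (by positivity)
        _ = 4 * (s:ℝ) * c * e := by ring
    calc ∫ x, gaussianPDFReal m s x * (x - m) ^ 2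
        ≤ ∫ x, g x := by
          apply integral_mono_of_nonneg
          · exact ae_of_all _ fun x => mul_nonneg (gaussianPDFReal_nonneg m s x) (sq_nonneg _)
          · exact hgint
          · exact ae_of_all _ hle
      _ = (4 * (s:ℝ) * (Real.sqrt (2 * π * s))⁻¹) * ∫ x, rexp (-(1 / (4 * (s:ℝ))) * (x - m) ^ 2) :=
          integral_const_mul _ _
      _ = (4 * (s:ℝ) * (Real.sqrt (2 * π * s))⁻¹) * Real.sqrt (π / (1 / (4 * (s:ℝ)))) := by
          rw [integral_sub_right_eq_self (fun a => rexp (-(1 / (4 * (s:ℝ))) * a ^ 2)) m,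
            integral_gaussian]
      _ ≤ 6 * s := by
          have hπ : π / (1 / (4 * (s:ℝ))) = 2 * (2 * π * s) := by field_simp; ring
          rw [hπ, Real.sqrt_mul (by norm_num : (0:ℝ) ≤ 2)]
          have h2πs : 0 < Real.sqrt (2 * π * (s:ℝ)) := Real.sqrt_pos.2 (by positivity)
          rw [show 4 * (s:ℝ) * (Real.sqrt (2 * π * (s:ℝ)))⁻¹ * (Real.sqrt 2 * Real.sqrt (2 * π * (s:ℝ)))
            = 4 * (s:ℝ) * Real.sqrt 2 * ((Real.sqrt (2 * π * (s:ℝ)))⁻¹ * Real.sqrt (2 * π * (s:ℝ))) by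
              ring, inv_mul_cancel₀ h2πs.ne', mul_one]
          have hsq2 : Real.sqrt 2 ≤ 3 / 2 := by
            nlinarith [Real.sq_sqrt (by norm_num : (0:ℝ) ≤ 2), Real.sqrt_nonneg 2]
          nlinarith [s.coe_nonneg, Real.sqrt_nonneg 2]



lemma var_lb {Ω : Type*} [MeasurableSpace Ω] (P : Measure Ω) [IsProbabilityMeasure P]
    {Y : Ω → ℝ} (hY : Measurable Y) {m : ℝ} {s : NNReal}
    (hmap : Measure.map Y P = gaussianReal m s) {v : ℝ} (hv : 0 < v)
    (hvar : v ≤ variance Y P) : v ≤ 6 * s := by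
  have hmem : MemLp Y 2 P := by
    by_contra h
    have htop := evariance_eq_top hY.aestronglyMeasurable h
    rw [variance, htop] at hvar
    simp at hvar
    linarith
  have hint : Integrable Y P := hmem.integrable one_le_two
  have hEshift : ∫ ω, (Y ω - m) ∂P = (∫ ω, Y ω ∂P) - m := by
    rw [integral_sub hint (integrable_const m), integral_const]
    simp
  have hvs : variance (fun ω => Y ω - m) P = variance Y P := by
    rw [variance, variance]
    congr 1
    rw [evariance, evariance]
    have : ∀ ω, Y ω - m - (∫ ω', (Y ω' - m) ∂P) = Y ω - ∫ ω', Y ω' ∂P := by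
      intro ω
      rw [hEshift]
      ring
    exact lintegral_congr fun ω => by rw [show (fun ω => Y ω - m) ω - P[fun ω => Y ω - m]
      = Y ω - P[Y] from this ω]
  have h2 : variance (fun ω => Y ω - m) P ≤ ∫ ω, (Y ω - m) ^ 2 ∂P := by
    have h := variance_le_expectation_sq (μ := P) (X := fun ω => Y ω - m)
      ((hY.sub measurable_const).aestronglyMeasurable)
    simpa using h
  have h3 : ∫ ω, (Y ω - m) ^ 2 ∂P = ∫ x, (x - m) ^ 2 ∂(gaussianReal m s) := by
    rw [← hmap]
    exact (integral_map hY.aemeasurable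
      (f := fun x => (x - m) ^ 2)
      (((measurable_id.sub_const m).pow_const 2).aestronglyMeasurable)).symm
  have h4 := integral_sq_gauss_le m s
  linarith [hvs, h2, h3, h4, hvar]

set_option maxHeartbeats 1000000

/-- Main theorem of the paper (Section 2.2.2): if `X_n = (1+a_n)·Y_n + b_n + ζ_n`
with `Y_n` Gaussian of variance `≥ v > 0`, `ζ_n ∼ N(0, σ̃_n²)` independent of
`Y_n`, `σ_n → 0`, `|a_n| ≤ K_a σ_n`, `|b_n| ≤ K_b σ_n` and `σ̃_n ≤ σ_n`, then
`E[(1_{X_n ≥ u} − 1_{Y_n ≥ u})²] = O(σ_n·|log σ_n|^{1/2})`. -/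
theorem indicator_diff_sq_rate
    {Ω : Type*} [MeasurableSpace Ω] (P : Measure Ω) [IsProbabilityMeasure P]
    (u v : ℝ) (hv : 0 < v)
    (Y ζ : ℕ → Ω → ℝ)
    (hYmeas : ∀ n, Measurable (Y n)) (hζmeas : ∀ n, Measurable (ζ n))
    (hYgauss : ∀ n, ∃ (m : ℝ) (s : NNReal), Measure.map (Y n) P = gaussianReal m s)
    (hYvar : ∀ n, v ≤ variance (Y n) P)
    (σt : ℕ → ℝ) (hσt : ∀ n, 0 < σt n)
    (hζlaw : ∀ n, Measure.map (ζ n) P = gaussianReal 0 ⟨(σt n) ^ 2, sq_nonneg _⟩)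
    (hindep : ∀ n, IndepFun (Y n) (ζ n) P)
    (a b : ℕ → ℝ)
    (σ : ℕ → ℝ) (hσpos : ∀ n, 0 < σ n)
    (hσlim : Tendsto σ atTop (nhds 0))
    (Ka Kb : ℝ) (hKa : 0 < Ka) (hKb : 0 < Kb)
    (ha : ∀ n, |a n| ≤ Ka * σ n) (hb : ∀ n, |b n| ≤ Kb * σ n)
    (hσtle : ∀ n, σt n ≤ σ n) :
    ∃ C > (0 : ℝ), ∃ N : ℕ, ∀ n ≥ N,
      (∫ ω, ((if u ≤ (1 + a n) * Y n ω + b n + ζ n ω then (1 : ℝ) else 0)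
            - (if u ≤ Y n ω then (1 : ℝ) else 0)) ^ 2 ∂P)
        ≤ C * σ n * Real.sqrt |Real.log (σ n)| := by
  set cv : ℝ := (Real.sqrt (2 * π * (v / 6)))⁻¹ with hcv
  have hcvpos : 0 < cv := by
    rw [hcv]
    positivity
  set C : ℝ := cv * (4 * Ka * |u| + 4 * Kb + 8) + 1 with hC
  have hCpos : 0 < C := by positivity
  refine ⟨C, hCpos, ?_⟩
  have hδ : (0 : ℝ) < min (1 / (2 * Ka)) (rexp (-1)) := by positivity
  obtain ⟨N, hN⟩ := (Filter.eventually_atTop.mp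
    (hσlim.eventually (eventually_lt_nhds hδ)))
  refine ⟨N, fun n hn => ?_⟩
  -- notation
  set s : ℝ := σ n with hs_def
  have hspos : 0 < s := hσpos n
  have hsmall := hN n hn
  have hsKa : Ka * s < 1 / 2 := by
    have h1 : s < 1 / (2 * Ka) := lt_of_lt_of_le hsmall (min_le_left _ _)
    rw [lt_div_iff₀ (by positivity)] at h1
    nlinarith
  have hse : s < rexp (-1) := lt_of_lt_of_le hsmall (min_le_right _ _)
  have hslt1 : s < 1 := lt_trans hse (Real.exp_lt_one_iff.mpr (by norm_num))
  have hlogle : Real.log s ≤ -1 := by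
    calc Real.log s ≤ Real.log (rexp (-1)) :=
          Real.log_le_log (by positivity) hse.le
      _ = -1 := Real.log_exp _
  have hlogneg : Real.log s < 0 := by linarith
  have habslog : |Real.log s| = -Real.log s := abs_of_neg hlogneg
  have habs1 : 1 ≤ |Real.log s| := by rw [habslog]; linarith
  set L : ℝ := Real.sqrt |Real.log s| with hL_def
  have hL1 : 1 ≤ L := by
    rw [hL_def, show (1:ℝ) = Real.sqrt 1 by rw [Real.sqrt_one]]
    exact Real.sqrt_le_sqrt habs1
  have hLpos : 0 < L := lt_of_lt_of_le one_pos hL1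
  have hL2 : L ^ 2 = |Real.log s| := Real.sq_sqrt (abs_nonneg _)
  set t : ℝ := 2 * s * L with ht_def
  have htpos : 0 < t := by positivity
  set ε : ℝ := 2 * (Ka * |u| * s + Kb * s + t) with hε_def
  have hεnn : 0 ≤ ε := by positivity
  -- the Gaussian law of Y n
  obtain ⟨m, sY, hmap⟩ := hYgauss n
  have hsYv : v ≤ 6 * sY := var_lb P (hYmeas n) hmap hv (hYvar n)
  have hsY0 : sY ≠ 0 := by
    intro h
    rw [h] at hsYv
    simp at hsYv
    linarith
  have hsYpos : (0:ℝ) < sY := lt_of_le_of_ne sY.coe_nonneg (by exact_mod_cast hsY0.symm)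
  -- the sets
  set X : Ω → ℝ := fun ω => (1 + a n) * Y n ω + b n + ζ n ω with hX_def
  have hXmeas : Measurable X := (((hYmeas n).const_mul (1 + a n)).add_const (b n)).add (hζmeas n)
  set A : Set Ω := {ω | u ≤ X ω} with hA_def
  set B : Set Ω := {ω | u ≤ Y n ω} with hB_def
  set D : Set Ω := (A \ B) ∪ (B \ A) with hD_def
  have hAmeas : MeasurableSet A := measurableSet_le measurable_const hXmeas
  have hBmeas : MeasurableSet B := measurableSet_le measurable_const (hYmeas n)
  have hDmeas : MeasurableSet D := ((hAmeas.diff hBmeas).union (hBmeas.diff hAmeas))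
  -- integrand rewrite
  have hpt : ∀ ω, ((if u ≤ (1 + a n) * Y n ω + b n + ζ n ω then (1 : ℝ) else 0)
      - (if u ≤ Y n ω then (1 : ℝ) else 0)) ^ 2 = D.indicator (1 : Ω → ℝ) ω := by
    intro ω
    by_cases h1 : u ≤ (1 + a n) * Y n ω + b n + ζ n ω <;>
      by_cases h2 : u ≤ Y n ω <;>
      simp [Set.indicator_apply, hD_def, hA_def, hB_def, hX_def, h1, h2]
  have hint_eq : (∫ ω, ((if u ≤ (1 + a n) * Y n ω + b n + ζ n ω then (1 : ℝ) else 0)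
      - (if u ≤ Y n ω then (1 : ℝ) else 0)) ^ 2 ∂P) = (P D).toReal := by
    rw [integral_congr_ae (Filter.Eventually.of_forall hpt), integral_indicator_one hDmeas, measureReal_def]
  rw [hint_eq]
  -- inclusion
  set E1 : Set Ω := (Y n) ⁻¹' (Icc (u - ε) (u + ε)) with hE1_def
  set E2 : Set Ω := (ζ n) ⁻¹' {x | t ≤ |x|} with hE2_def
  have hsub : D ⊆ E1 ∪ E2 := by
    intro ω hω
    by_cases hζω : t ≤ |ζ n ω|
    · exact Or.inr hζω
    · left
      push_neg at hζω
      obtain ⟨hζl, hζr⟩ := abs_lt.mp hζω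
      have hau : |a n * u| ≤ Ka * s * |u| := by
        rw [abs_mul]
        exact mul_le_mul_of_nonneg_right (ha n) (abs_nonneg u)
      obtain ⟨haul, haur⟩ := abs_le.mp hau
      obtain ⟨hbl, hbr⟩ := abs_le.mp (hb n)
      obtain ⟨hal, har⟩ := abs_le.mp (ha n)
      have hapos : (0:ℝ) ≤ a n + 1 / 2 := by nlinarith
      simp only [hE1_def, Set.mem_preimage, Set.mem_Icc]
      rcases hω with ⟨hA1, hB1⟩ | ⟨hB1, hA1⟩
      · -- u ≤ X, Y < u
        have hXin : u ≤ (1 + a n) * Y n ω + b n + ζ n ω := hA1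
        have hYlt : ¬ (u ≤ Y n ω) := hB1
        push_neg at hYlt
        constructor
        · nlinarith [mul_nonneg hapos (by linarith : (0:ℝ) ≤ u - Y n ω)]
        · linarith
      · -- u ≤ Y, X < u
        have hYin : u ≤ Y n ω := hB1
        have hXlt : ¬ (u ≤ X ω) := hA1
        push_neg at hXlt
        have hXlt' : (1 + a n) * Y n ω + b n + ζ n ω < u := hXlt
        constructor
        · linarith
        · nlinarith [mul_nonneg hapos (by linarith : (0:ℝ) ≤ Y n ω - u)]
  -- measure bounds
  have hE1bound : (P E1).toReal ≤ cv * (4 * Ka * |u| + 4 * Kb + 8) * s * L := by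
    have h1 : P E1 = (Measure.map (Y n) P) (Icc (u - ε) (u + ε)) :=
      (Measure.map_apply (hYmeas n) measurableSet_Icc).symm
    rw [h1, hmap]
    have h2 := gauss_Icc_le m sY hsY0 (by linarith : u - ε ≤ u + ε)
    have h3 : (u + ε - (u - ε)) = 2 * ε := by ring
    rw [h3] at h2
    have h4 : (Real.sqrt (2 * π * (sY:ℝ)))⁻¹ ≤ cv := by
      rw [hcv]
      apply inv_anti₀ (Real.sqrt_pos.2 (by nlinarith [Real.pi_gt_three]))
      apply Real.sqrt_le_sqrt
      nlinarith [Real.pi_pos]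
    calc (gaussianReal m sY (Icc (u - ε) (u + ε))).toReal
        ≤ 2 * ε * (Real.sqrt (2 * π * (sY:ℝ)))⁻¹ := h2
      _ ≤ 2 * ε * cv := by
          apply mul_le_mul_of_nonneg_left h4 (by positivity)
      _ ≤ cv * (4 * Ka * |u| + 4 * Kb + 8) * s * L := by
          rw [hε_def, ht_def]
          have hsL : s ≤ s * L := le_mul_of_one_le_right hspos.le hL1
          have habsu : 0 ≤ |u| := abs_nonneg u
          nlinarith [mul_le_mul_of_nonneg_left hsL (mul_nonneg (mul_nonneg (by norm_num : (0:ℝ) ≤ 4) hKa.le) habsu), mul_le_mul_of_nonneg_left hsL (by positivity : (0:ℝ) ≤ 4 * Kb)]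
  have hE2bound : (P E2).toReal ≤ s * L := by
    have h1 : P E2 = (Measure.map (ζ n) P) {x | t ≤ |x|} := by
      rw [Measure.map_apply (hζmeas n) (measurableSet_le measurable_const measurable_abs)]
    have hst2 : (0:ℝ) < σt n ^ 2 := pow_pos (hσt n) 2
    rw [h1, hζlaw n]
    have h2 : ((gaussianReal 0 ⟨σt n ^ 2, hst2.le⟩) {x | t ≤ |x|}).toReal
        ≤ 2 * ((Real.sqrt (σt n ^ 2) / t) * rexp (-t ^ 2 / (2 * σt n ^ 2))) :=
      gauss_abs_le hst2 htpos
    have h2' : ((gaussianReal 0 ⟨σt n ^ 2, sq_nonneg (σt n)⟩) {x | t ≤ |x|}).toReal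
        ≤ 2 * ((Real.sqrt (σt n ^ 2) / t) * rexp (-t ^ 2 / (2 * σt n ^ 2))) := h2
    refine le_trans h2' ?_
    rw [Real.sqrt_sq (hσt n).le]
    have hσts : σt n ≤ s := hσtle n
    have hexple : rexp (-t ^ 2 / (2 * σt n ^ 2)) ≤ rexp (-t ^ 2 / (2 * s ^ 2)) := by
      apply Real.exp_le_exp.mpr
      rw [neg_div, neg_div, neg_le_neg_iff]
      exact div_le_div_of_nonneg_left (sq_nonneg t) (mul_pos two_pos (pow_pos (hσt n) 2)) (by nlinarith [hσt n, hσtle n])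
    have hexpval : rexp (-t ^ 2 / (2 * s ^ 2)) = s ^ 2 := by
      have ht2 : -t ^ 2 / (2 * s ^ 2) = 2 * Real.log s := by
        rw [ht_def]
        have : -(2 * s * L) ^ 2 / (2 * s ^ 2) = -2 * L ^ 2 := by
          field_simp
        rw [this, hL2, habslog]
        ring
      rw [ht2, show 2 * Real.log s = Real.log s + Real.log s by ring, Real.exp_add,
        Real.exp_log hspos]
      ring
    have hfrac : σt n / t ≤ 1 / 2 := by
      rw [ht_def]
      rw [div_le_div_iff₀ (by positivity) (by norm_num)]
      nlinarith
    calc 2 * ((σt n / t) * rexp (-t ^ 2 / (2 * σt n ^ 2)))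
        ≤ 2 * ((1 / 2) * (s ^ 2)) := by
          apply mul_le_mul_of_nonneg_left _ (by norm_num)
          apply mul_le_mul hfrac (le_of_le_of_eq hexple hexpval) (Real.exp_pos _).le (by norm_num)
      _ = s * s := by ring
      _ ≤ s * L := by nlinarith
  -- conclusion
  calc (P D).toReal
      ≤ (P E1 + P E2).toReal := by
        apply ENNReal.toReal_mono
        · exact ENNReal.add_ne_top.mpr ⟨measure_ne_top P _, measure_ne_top P _⟩
        · exact le_trans (measure_mono hsub) (measure_union_le _ _)
    _ = (P E1).toReal + (P E2).toReal :=
        ENNReal.toReal_add (measure_ne_top P _) (measure_ne_top P _)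
    _ ≤ cv * (4 * Ka * |u| + 4 * Kb + 8) * s * L + s * L := add_le_add hE1bound hE2bound
    _ = C * s * L := by rw [hC]; ring
    _ = C * σ n * Real.sqrt |Real.log (σ n)| := by rw [hs_def, hL_def]
end

section
/- Let X and Y be square-integrable real random variables with Var(Y) ≥ v > 0, |E[Y]| ≤ M, and E[X] = E[Y], and let a, b ∈ ℝ and ζ satisfy X = (1+a)·Y + b + ζ with E[ζ] = 0 and E[Y·ζ] = 0. Set σ := (Var(X − Y))^{1/2}. Then |a| ≤ σ/√v, |b| ≤ (M/√v)·σ, and E[ζ²]^{1/2} ≤ σ. -/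
open MeasureTheory ProbabilityTheory

/-- The bounds (7) of the paper: with `σ² = Var(X − Y)`, `Var(Y) ≥ v > 0` and
`|E[Y]| ≤ M`, the regression coefficients satisfy `|a| ≤ σ/√v`,
`|b| ≤ (M/√v)·σ`, and `E[ζ²]^{1/2} ≤ σ`. -/
theorem regression_coefficient_bounds
    {Ω : Type*} [MeasurableSpace Ω] (P : Measure Ω) [IsProbabilityMeasure P]
    (X Y : Ω → ℝ) (hX : MemLp X 2 P) (hY : MemLp Y 2 P)
    (v M : ℝ) (hv : 0 < v) (hvar : v ≤ variance Y P)
    (hM : |∫ ω, Y ω ∂P| ≤ M)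
    (hmean : (∫ ω, X ω ∂P) = ∫ ω, Y ω ∂P)
    (a b : ℝ) (ζ : Ω → ℝ)
    (hdecomp : ∀ ω, X ω = (1 + a) * Y ω + b + ζ ω)
    (hζmean : (∫ ω, ζ ω ∂P) = 0)
    (hortho : (∫ ω, Y ω * ζ ω ∂P) = 0) :
    |a| ≤ Real.sqrt (variance (fun ω => X ω - Y ω) P) / Real.sqrt v ∧
    |b| ≤ (M / Real.sqrt v) * Real.sqrt (variance (fun ω => X ω - Y ω) P) ∧
    Real.sqrt (∫ ω, ζ ω ^ 2 ∂P) ≤ Real.sqrt (variance (fun ω => X ω - Y ω) P) := by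
  set μ := ∫ ω, Y ω ∂P with hμ
  -- ζ is in L2
  have hζfun : ζ = fun ω => X ω - (1 + a) * Y ω - b := by
    funext ω; have := hdecomp ω; linarith
  have hζ : MemLp ζ 2 P := by
    rw [hζfun]
    exact (hX.sub (hY.const_mul (1 + a))).sub (memLp_const b)
  have iY : Integrable Y P := hY.integrable one_le_two
  have iζ : Integrable ζ P := hζ.integrable one_le_two
  have iY2 : Integrable (fun ω => Y ω ^ 2) P := hY.integrable_sq
  have iζ2 : Integrable (fun ω => ζ ω ^ 2) P := hζ.integrable_sq
  have iYζ : Integrable (fun ω => Y ω * ζ ω) P := by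
    have h12 : (1 : ENNReal) / 1 = 1 / 2 + 1 / 2 := by
      rw [one_div, one_div, inv_one, ENNReal.inv_two_add_inv_two]
    have := (hζ.smul (𝕜 := ℝ) hY (p := 2) (q := 2) (r := 1) (hpqr := ⟨by rw [inv_one, ENNReal.inv_two_add_inv_two]⟩))
    exact this.integrable le_rfl
  -- b = -a * μ
  have hb : b = -a * μ := by
    have hiYb : Integrable (fun ω => (1 + a) * Y ω + b) P :=
      (iY.const_mul _).add (integrable_const b)
    have h1 : (∫ ω, X ω ∂P) = (1 + a) * μ + b := by
      have e : (∫ ω, X ω ∂P) = ∫ ω, ((1 + a) * Y ω + b) + ζ ω ∂P := by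
        congr 1; funext ω; rw [hdecomp ω]
      rw [e, integral_add hiYb iζ, hζmean,
        integral_add (iY.const_mul _) (integrable_const b),
        integral_const_mul, integral_const]
      simp [hμ]
    rw [hmean] at h1
    linarith
  -- the function X - Y
  set Z : Ω → ℝ := fun ω => X ω - Y ω with hZdef
  have hZ : MemLp Z 2 P := hX.sub hY
  have hZfun : ∀ ω, Z ω = a * Y ω + b + ζ ω := by
    intro ω; have := hdecomp ω; simp only [hZdef]; linarith
  have hZmean : (∫ ω, Z ω ∂P) = 0 := by
    simp only [hZdef]
    rw [integral_sub (hX.integrable one_le_two) iY, hmean, sub_self]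
  -- partial-sum integrability
  have i1 : Integrable (fun ω => a ^ 2 * Y ω ^ 2 + 2 * a * b * Y ω) P :=
    (iY2.const_mul _).add (iY.const_mul _)
  have i2 : Integrable (fun ω => a ^ 2 * Y ω ^ 2 + 2 * a * b * Y ω
      + 2 * a * (Y ω * ζ ω)) P := i1.add (iYζ.const_mul _)
  have i3 : Integrable (fun ω => a ^ 2 * Y ω ^ 2 + 2 * a * b * Y ω
      + 2 * a * (Y ω * ζ ω) + 2 * b * ζ ω) P := i2.add (iζ.const_mul _)
  have i4 : Integrable (fun ω => a ^ 2 * Y ω ^ 2 + 2 * a * b * Y ω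
      + 2 * a * (Y ω * ζ ω) + 2 * b * ζ ω + ζ ω ^ 2) P := i3.add iζ2
  -- compute the variance of Z
  have hvarZ : variance Z P = a ^ 2 * variance Y P + ∫ ω, ζ ω ^ 2 ∂P := by
    have h2 : variance Z P = ∫ ω, Z ω ^ 2 ∂P := by
      rw [variance_eq_sub hZ, hZmean]
      simp [Pi.pow_apply]
    have h3 : (∫ ω, Z ω ^ 2 ∂P)
        = ∫ ω, (a ^ 2 * Y ω ^ 2 + 2 * a * b * Y ω + 2 * a * (Y ω * ζ ω)
            + 2 * b * ζ ω + ζ ω ^ 2) + b ^ 2 ∂P := by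
      congr 1; funext ω; rw [hZfun ω]; ring
    rw [h2, h3, integral_add i4 (integrable_const _),
      integral_add i3 iζ2, integral_add i2 (iζ.const_mul _),
      integral_add i1 (iYζ.const_mul _),
      integral_add (iY2.const_mul _) (iY.const_mul _),
      integral_const_mul, integral_const_mul, integral_const_mul, integral_const_mul,
      hortho, hζmean, integral_const]
    rw [variance_eq_sub hY, hb, ← hμ]
    simp
    ring
  have hζ2nn : (0:ℝ) ≤ ∫ ω, ζ ω ^ 2 ∂P := integral_nonneg fun ω => sq_nonneg _
  have hvY : (0:ℝ) < variance Y P := lt_of_lt_of_le hv hvar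
  have hsv : (0:ℝ) < Real.sqrt v := Real.sqrt_pos.mpr hv
  have key : a ^ 2 * v ≤ variance Z P := by
    nlinarith [sq_nonneg a]
  have ha : |a| ≤ Real.sqrt (variance Z P) / Real.sqrt v := by
    rw [le_div_iff₀ hsv]
    have h : Real.sqrt (a ^ 2 * v) ≤ Real.sqrt (variance Z P) := Real.sqrt_le_sqrt key
    rwa [Real.sqrt_mul (sq_nonneg a), Real.sqrt_sq_eq_abs] at h
  refine ⟨ha, ?_, ?_⟩
  · have hM0 : 0 ≤ M := le_trans (abs_nonneg _) hM
    have hab : |b| = |a| * |μ| := by rw [hb, abs_mul, abs_neg]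
    rw [hab]
    calc |a| * |μ| ≤ (Real.sqrt (variance Z P) / Real.sqrt v) * M :=
          mul_le_mul ha hM (abs_nonneg _) (by positivity)
      _ = (M / Real.sqrt v) * Real.sqrt (variance Z P) := by ring
  · apply Real.sqrt_le_sqrt
    nlinarith [mul_nonneg (sq_nonneg a) hvY.le]
end

section
/- Let Y be a real random variable, σ̃ > 0, and ζ a centered Gaussian random variable with variance σ̃², independent of Y; let a, b, u ∈ ℝ with |a| < 1, and set X := (1+a)·Y + b + ζ. Let σ ≥ σ̃ and let α > |a·u + b| (so α > 0). Define h⁻ := (u − b − α)/(1+a) and h⁺ := (u − b + α)/(1+a). Then, almost surely, E[(1_{X ≥ u} − 1_{Y ≥ u})² ∣ Y] ≤ Ψ(α/σ)·1_{Y ∉ [h⁻, h⁺]} + 1_{Y ∈ [h⁻, h⁺]}. -/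
open MeasureTheory ProbabilityTheory Real

/-- The upper tail of the standard Gaussian distribution:
`gaussTail t = P(Z ≥ t)` for `Z` standard normal. -/
noncomputable def gaussTail (t : ℝ) : ℝ :=
  ((gaussianReal 0 1) (Set.Ici t)).toReal

/-!
Conditionally on `Y = y`, independence lets one integrate `ζ` out against its Gaussian law. For
fixed `y` the integrand is the indicator that the level `u` separates `y` from `(1+a)y + b + ζ`.
Since `α > |au + b|` we have `h⁻ < u < h⁺`, so below `h⁻` a crossing forces `ζ ≥ α` and above `h⁺`
it forces `ζ ≤ -α`; each has probability `Ψ(α/σ̃) ≤ Ψ(α/σ)`. On `[h⁻, h⁺]` the integrand is at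
most `1`.
-/

open Set Function

lemma gaussTail_antitone : Antitone gaussTail := fun _ _ hst =>
  ENNReal.toReal_mono (measure_ne_top _ _) (measure_mono (Ici_subset_Ici.2 hst))

lemma gaussianReal_real_Ici_eq_gaussTail {σ : ℝ} (hσ : 0 < σ) (α : ℝ) :
    (gaussianReal 0 ⟨σ ^ 2, sq_nonneg σ⟩).real (Ici α) = gaussTail (α / σ) := by
  have hscale : (gaussianReal 0 1).map (σ * ·) = gaussianReal 0 ⟨σ ^ 2, sq_nonneg σ⟩ := by
    rw [gaussianReal_map_const_mul]
    congr 1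
    · ring
    · ext; simp; rfl
  rw [← hscale, map_measureReal_apply (measurable_const_mul σ) measurableSet_Ici, gaussTail,
    measureReal_def]
  congr 2
  ext x
  simp [div_le_iff₀ hσ, mul_comm]

lemma gaussianReal_zero_real_Iic_neg (v : NNReal) (α : ℝ) :
    (gaussianReal 0 v).real (Iic (-α)) = (gaussianReal 0 v).real (Ici α) := by
  have hsymm := gaussianReal_map_neg (μ := 0) (v := v)
  rw [neg_zero] at hsymm
  have hpre : (fun x : ℝ => -x) ⁻¹' Iic (-α) = Ici α := by ext; simp
  conv_lhs => rw [← hsymm, map_measureReal_apply measurable_neg measurableSet_Iic, hpre]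

lemma condExp_comp_ae_eq_integral_map_of_indepFun {Ω β γ E : Type*} [MeasurableSpace Ω]
    {P : Measure Ω} [IsProbabilityMeasure P] [MeasurableSpace β] [MeasurableSpace γ]
    [StandardBorelSpace γ] [Nonempty γ] [NormedAddCommGroup E] [NormedSpace ℝ E]
    [CompleteSpace E] {Y : Ω → β} {ζ : Ω → γ} (hY : Measurable Y) (hζ : Measurable ζ)
    (hindep : IndepFun Y ζ P) {f : β → γ → E} (hf : StronglyMeasurable (uncurry f))
    (hfi : Integrable (fun ω => f (Y ω) (ζ ω)) P) :
    P[fun ω => f (Y ω) (ζ ω) | MeasurableSpace.comap Y inferInstance]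
      =ᵐ[P] fun ω => ∫ z, f (Y ω) z ∂(P.map ζ) := by
  have hκ : condDistrib ζ Y P =ᵐ[P.map Y] Kernel.const β (P.map ζ) := by
    refine condDistrib_ae_eq_of_measure_eq_compProd Y hζ.aemeasurable ?_
    rw [Measure.compProd_const,
      ← indepFun_iff_map_prod_eq_prod_map_map hY.aemeasurable hζ.aemeasurable]
    exact hindep
  filter_upwards [condExp_prod_ae_eq_integral_condDistrib hY hζ.aemeasurable hf hfi,
    ae_of_ae_map hY.aemeasurable hκ] with ω hcond hconst
  refine hcond.trans ?_
  rw [hconst, Kernel.const_apply]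
  rfl

noncomputable def thresholdFlip (a b u y z : ℝ) : ℝ :=
  ((if u ≤ (1 + a) * y + b + z then 1 else 0) - (if u ≤ y then 1 else 0)) ^ 2

section thresholdFlip

variable {a b u α y z : ℝ}

lemma measurable_thresholdFlip (a b u : ℝ) : Measurable (uncurry (thresholdFlip a b u)) := by
  unfold thresholdFlip uncurry
  refine ((measurable_const.ite ?_ measurable_const).sub
    (measurable_const.ite ?_ measurable_const)).pow_const 2
  · exact measurableSet_le measurable_const (by fun_prop)
  · exact measurableSet_le measurable_const measurable_fst

lemma norm_thresholdFlip_le_one : ‖thresholdFlip a b u y z‖ ≤ 1 := by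
  unfold thresholdFlip
  split_ifs <;> norm_num

lemma integrable_thresholdFlip_comp {X : Type*} [MeasurableSpace X] {μ : Measure X}
    [IsFiniteMeasure μ] {f g : X → ℝ} (hf : Measurable f) (hg : Measurable g) :
    Integrable (fun x => thresholdFlip a b u (f x) (g x)) μ :=
  .of_bound ((measurable_thresholdFlip a b u).comp (hf.prodMk hg)).aestronglyMeasurable 1
    (ae_of_all _ fun _ => norm_thresholdFlip_le_one)

lemma thresholdFlip_le_one : thresholdFlip a b u y z ≤ 1 :=
  (le_abs_self _).trans norm_thresholdFlip_le_one

lemma thresholdFlip_le_indicator_Ici (hy : (1 + a) * y + b + α < u) (hyu : y < u) :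
    thresholdFlip a b u y z ≤ (Ici α).indicator 1 z := by
  by_cases hz : α ≤ z
  · simpa [hz] using thresholdFlip_le_one
  · have hX : ¬ u ≤ (1 + a) * y + b + z := by linarith
    simp [thresholdFlip, hX, hyu.not_ge, hz]

lemma thresholdFlip_le_indicator_Iic (hy : u < (1 + a) * y + b - α) (hyu : u ≤ y) :
    thresholdFlip a b u y z ≤ (Iic (-α)).indicator 1 z := by
  by_cases hz : z ≤ -α
  · simpa [hz] using thresholdFlip_le_one
  · have hX : u ≤ (1 + a) * y + b + z := by linarith
    simp [thresholdFlip, hX, hyu, hz]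

lemma integral_thresholdFlip_le {ν : Measure ℝ} [IsProbabilityMeasure ν] {t : ℝ}
    (h1a : 0 < 1 + a) (hα : |a * u + b| < α)
    (hneg : ν.real (Iic (-α)) ≤ t) (hpos : ν.real (Ici α) ≤ t) (y : ℝ) :
    ∫ z, thresholdFlip a b u y z ∂ν
      ≤ t * (if y ∈ Icc ((u - b - α) / (1 + a)) ((u - b + α) / (1 + a)) then 0 else 1)
        + (if y ∈ Icc ((u - b - α) / (1 + a)) ((u - b + α) / (1 + a)) then 1 else 0) := by
  have hint : Integrable (thresholdFlip a b u y) ν :=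
    integrable_thresholdFlip_comp measurable_const measurable_id
  have hαu := abs_lt.1 hα
  split_ifs with hI
  · calc ∫ z, thresholdFlip a b u y z ∂ν ≤ ∫ _, 1 ∂ν :=
          integral_mono hint (integrable_const 1) fun _ => thresholdFlip_le_one
      _ = t * 0 + 1 := by simp
  · rw [mem_Icc, not_and_or, not_le, not_le, div_lt_iff₀ h1a, lt_div_iff₀ h1a] at hI
    rcases hI with hlow | hhigh
    · calc ∫ z, thresholdFlip a b u y z ∂ν ≤ ∫ z, (Ici α).indicator 1 z ∂ν :=
            integral_mono hint ((integrable_const 1).indicator measurableSet_Ici)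
              fun _ => thresholdFlip_le_indicator_Ici (by linarith) (by nlinarith)
        _ = ν.real (Ici α) := integral_indicator_one measurableSet_Ici
        _ ≤ t * 1 + 0 := by linarith
    · calc ∫ z, thresholdFlip a b u y z ∂ν ≤ ∫ z, (Iic (-α)).indicator 1 z ∂ν :=
            integral_mono hint ((integrable_const 1).indicator measurableSet_Iic)
              fun _ => thresholdFlip_le_indicator_Iic (by linarith) (by nlinarith)
        _ = ν.real (Iic (-α)) := integral_indicator_one measurableSet_Iic
        _ ≤ t * 1 + 0 := by linarith

end thresholdFlip

/-- Inequality (10) of the paper: with `X = (1+a)·Y + b + ζ`, `|a| < 1`,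
`σ ≥ σ̃`, `α > |a·u + b|`, `h⁻ = (u−b−α)/(1+a)` and `h⁺ = (u−b+α)/(1+a)`,
almost surely
`E[(1_{X ≥ u} − 1_{Y ≥ u})² ∣ Y] ≤ Ψ(α/σ)·1_{Y ∉ [h⁻,h⁺]} + 1_{Y ∈ [h⁻,h⁺]}`. -/
theorem condexp_indicator_diff_sq_bound
    {Ω : Type*} [MeasurableSpace Ω] (P : Measure Ω) [IsProbabilityMeasure P]
    (Y ζ : Ω → ℝ) (hYmeas : Measurable Y) (hζmeas : Measurable ζ)
    (σt : ℝ) (hσt : 0 < σt)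
    (hζlaw : Measure.map ζ P = gaussianReal 0 ⟨σt ^ 2, sq_nonneg σt⟩)
    (hindep : IndepFun Y ζ P)
    (a b u : ℝ) (ha : |a| < 1)
    (σ : ℝ) (hσ : σt ≤ σ)
    (α : ℝ) (hα : |a * u + b| < α) :
    ∀ᵐ ω ∂P,
      (P[(fun ω' =>
          ((if u ≤ (1 + a) * Y ω' + b + ζ ω' then (1 : ℝ) else 0)
            - (if u ≤ Y ω' then (1 : ℝ) else 0)) ^ 2)
        | MeasurableSpace.comap Y inferInstance]) ω
      ≤ gaussTail (α / σ) *
          (if Y ω ∈ Set.Icc ((u - b - α) / (1 + a)) ((u - b + α) / (1 + a))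
            then 0 else 1)
        + (if Y ω ∈ Set.Icc ((u - b - α) / (1 + a)) ((u - b + α) / (1 + a))
            then 1 else 0) := by
  have h1a : 0 < 1 + a := by linarith [(abs_lt.1 ha).1]
  have hαpos : 0 < α := (abs_nonneg _).trans_lt hα
  have hpos : (P.map ζ).real (Ici α) ≤ gaussTail (α / σ) := by
    rw [hζlaw, gaussianReal_real_Ici_eq_gaussTail hσt]
    exact gaussTail_antitone (div_le_div_of_nonneg_left hαpos.le hσt hσ)
  -- `⟨σt ^ 2, _⟩` is elaborated at type `{r // 0 ≤ r}` rather than `ℝ≥0`, so the `NNReal`-lemma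
  -- is applied by `exact` (up to defeq) instead of `rw`.
  have hneg : (P.map ζ).real (Iic (-α)) ≤ gaussTail (α / σ) := by
    refine le_of_eq_of_le ?_ hpos
    rw [hζlaw]
    exact gaussianReal_zero_real_Iic_neg _ α
  have hfreeze := condExp_comp_ae_eq_integral_map_of_indepFun hYmeas hζmeas hindep
    (measurable_thresholdFlip a b u).stronglyMeasurable
    (integrable_thresholdFlip_comp (μ := P) hYmeas hζmeas)
  filter_upwards [hfreeze] with ω hω
  have := Measure.isProbabilityMeasure_map (μ := P) hζmeas.aemeasurable
  exact hω.le.trans <| integral_thresholdFlip_le h1a hα hneg hpos (Y ω)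
end
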